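/- arXiv:2212.05823 — 10 statements merged into one kernel-verified Lean document; each statement's English description precedes it below -/
import Mathlib

section
/- Suppose the graph G contains a k-clique with vertex set Q. Define N^1 = T_0 ∪ {edges of G with both endpoints in Q} and N^2 = T ∪ (W \ {edges with both endpoints in Q}). Then both sum_{i in N^1} p_i + sum_{j in union_{i in N^1} M(i)} p_j and sum_{i in N^2} p_i + sum_{j in union_{i in N^2} M(i)} p_j equal n + |W| + k. -/
open Finset

/-!
The `k.choose 2` edges inside the `k`-clique `Q` cover exactly `Q` (as `k ≥ 2`), so `N¹` covers
`Q ∪ S`, while `N²` covers all of `V` through any element of `T`. Since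
`|T| = k.choose 2 + k` and `|S| = n + |W| - k.choose 2 - 1`, both loads come to `n + |W| + k`.
-/

section CliqueInstance

variable {V : Type*} [Fintype V] [DecidableEq V]

/-- The edges of `G`, as a subtype. -/
abbrev EdgeT (G : SimpleGraph V) [DecidableRel G.Adj] := {e : Sym2 V // e ∈ G.edgeFinset}

/-- `|T| = (k² + k)/2`. -/
def tcard (k : ℕ) : ℕ := (k ^ 2 + k) / 2

/-- `|S| = n + |W| - (k² - k)/2 - 1`. -/
def scard (G : SimpleGraph V) [DecidableRel G.Adj] (k : ℕ) : ℕ :=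
  Fintype.card V + G.edgeFinset.card - (k ^ 2 - k) / 2 - 1

/-- The set `N = W ∪ T ∪ T₀` of the MWPSAS instance, as a type. -/
abbrev NT (G : SimpleGraph V) [DecidableRel G.Adj] (k : ℕ) :=
  EdgeT G ⊕ (Fin (tcard k) ⊕ Fin 1)

/-- The set `M = V ∪ S` of the MWPSAS instance, as a type. -/
abbrev MT (G : SimpleGraph V) [DecidableRel G.Adj] (k : ℕ) := V ⊕ Fin (scard G k)

/-- The associated subsets: an edge is associated with its endpoints,
an element of `T` with `V`, and the element of `T₀` with `S`. -/
def Ma (G : SimpleGraph V) [DecidableRel G.Adj] (k : ℕ) : NT G k → Finset (MT G k)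
  | Sum.inl e => (Finset.univ.filter (fun v => v ∈ (e : Sym2 V))).image Sum.inl
  | Sum.inr (Sum.inl _) => Finset.univ.image Sum.inl
  | Sum.inr (Sum.inr _) => Finset.univ.image Sum.inr

/-- The load of a part (all weights are 1):
`|P| + |⋃_{i ∈ P} M(i)|`. -/
def load (G : SimpleGraph V) [DecidableRel G.Adj] (k : ℕ) (P : Finset (NT G k)) : ℕ :=
  P.card + (P.biUnion (Ma G k)).card

end CliqueInstance

theorem Nat.choose_two_eq_sq_sub_div_two (k : ℕ) : k.choose 2 = (k ^ 2 - k) / 2 := by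
  rw [Nat.choose_two_right, sq, Nat.mul_sub_one]

namespace SimpleGraph

variable {V : Type*} {G : SimpleGraph V} {k : ℕ} {Q : Finset V}

theorem IsClique.filter_edgeFinset_eq_image_offDiag [Fintype V] [DecidableEq V]
    [DecidableRel G.Adj] (hQ : G.IsClique (Q : Set V)) :
    G.edgeFinset.filter (fun e => ∀ v ∈ e, v ∈ Q) = Q.offDiag.image (Function.uncurry Sym2.mk) := by
  ext e
  induction e with
  | _ a b =>
    simp only [mem_filter, mem_edgeFinset, mem_edgeSet, Sym2.mem_iff, mem_image, mem_offDiag,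
      Prod.exists, Function.uncurry_apply_pair, Sym2.eq_iff]
    constructor
    · rintro ⟨hab, h⟩
      exact ⟨a, b, ⟨h a (.inl rfl), h b (.inr rfl), hab.ne⟩, .inl ⟨rfl, rfl⟩⟩
    · rintro ⟨x, y, ⟨hx, hy, hxy⟩, ⟨rfl, rfl⟩ | ⟨rfl, rfl⟩⟩
      · exact ⟨hQ hx hy hxy, by rintro v (rfl | rfl) <;> assumption⟩
      · exact ⟨hQ hy hx hxy.symm, by rintro v (rfl | rfl) <;> assumption⟩

theorem IsNClique.card_filter_edgeFinset [Fintype V] [DecidableEq V] [DecidableRel G.Adj]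
    (hQ : G.IsNClique k Q) : #(G.edgeFinset.filter (fun e => ∀ v ∈ e, v ∈ Q)) = k.choose 2 := by
  rw [hQ.isClique.filter_edgeFinset_eq_image_offDiag, Sym2.card_image_offDiag, hQ.card_eq]

theorem IsNClique.exists_adj_of_mem (hQ : G.IsNClique k Q) (hk : 1 < k) {v : V} (hv : v ∈ Q) :
    ∃ w ∈ Q, G.Adj v w := by
  classical
  obtain ⟨w, hw, hwv⟩ := Q.exists_mem_ne (by rw [hQ.card_eq]; exact hk) v
  exact ⟨w, hw, hQ.isClique hv hw hwv.symm⟩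

end SimpleGraph

section CliqueInstance

variable {V : Type*} [Fintype V] [DecidableEq V] {G : SimpleGraph V} [DecidableRel G.Adj] {k : ℕ}

def edgesWithin (G : SimpleGraph V) [DecidableRel G.Adj] (Q : Finset V) : Finset (EdgeT G) :=
  univ.filter (fun e : EdgeT G => ∀ v, v ∈ (e : Sym2 V) → v ∈ Q)

def coveredVertices (E : Finset (EdgeT G)) : Finset V :=
  E.biUnion fun e => univ.filter (· ∈ (e : Sym2 V))

theorem card_edgesWithin {Q : Finset V} (hQ : G.IsNClique k Q) :
    #(edgesWithin G Q) = k.choose 2 := by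
  rw [← hQ.card_filter_edgeFinset, ← card_image_of_injective _ Subtype.val_injective]
  congr 1
  ext e
  simp [edgesWithin, and_comm]

theorem compl_edgesWithin (Q : Finset V) :
    (edgesWithin G Q)ᶜ = univ.filter (fun e : EdgeT G => ¬ ∀ v, v ∈ (e : Sym2 V) → v ∈ Q) := by
  rw [edgesWithin, filter_not, compl_eq_univ_sdiff]

theorem coveredVertices_edgesWithin {Q : Finset V} (hQ : G.IsNClique k Q) (hk : 1 < k) :
    coveredVertices (edgesWithin G Q) = Q := by
  ext v
  simp only [coveredVertices, edgesWithin, mem_biUnion, mem_filter, mem_univ, true_and]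
  constructor
  · rintro ⟨e, he, hv⟩
    exact he v hv
  · intro hv
    obtain ⟨w, hw, hvw⟩ := hQ.exists_adj_of_mem hk hv
    refine ⟨⟨s(v, w), G.mem_edgeFinset.2 hvw⟩, fun u hu => ?_, Sym2.mem_mk_left v w⟩
    rcases Sym2.mem_iff.1 hu with rfl | rfl <;> assumption

theorem biUnion_Ma_image_inl (E : Finset (EdgeT G)) :
    (E.image Sum.inl).biUnion (Ma G k) = (coveredVertices E).image Sum.inl := by
  rw [image_biUnion, coveredVertices, biUnion_image]
  rfl

theorem load_T₀_union (E : Finset (EdgeT G)) :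
    load G k ((univ : Finset (Fin 1)).image (fun z => (Sum.inr (Sum.inr z) : NT G k)) ∪
      E.image Sum.inl) = 1 + #E + (#(coveredVertices E) + scard G k) := by
  rw [univ_unique, image_singleton, load, union_biUnion, singleton_biUnion, biUnion_Ma_image_inl,
    card_union_of_disjoint (disjoint_left.2 (by simp)),
    card_union_of_disjoint (disjoint_left.2 (by simp [Ma])),
    card_image_of_injective _ Sum.inl_injective, card_image_of_injective _ Sum.inl_injective, Ma,
    card_image_of_injective _ Sum.inr_injective, card_singleton, card_univ, Fintype.card_fin]
  omega

theorem load_T_union (hk : 0 < tcard k) (E : Finset (EdgeT G)) :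
    load G k ((univ : Finset (Fin (tcard k))).image (fun t => (Sum.inr (Sum.inl t) : NT G k)) ∪
      E.image Sum.inl) = tcard k + #E + Fintype.card V := by
  have hT : ((univ : Finset (Fin (tcard k))).image
      (fun t => (Sum.inr (Sum.inl t) : NT G k))).biUnion (Ma G k) = univ.image Sum.inl := by
    have : Nonempty (Fin (tcard k)) := ⟨⟨0, hk⟩⟩
    ext
    simp [Ma]
  rw [load, union_biUnion, hT, biUnion_Ma_image_inl,
    union_eq_left.2 (image_subset_image (subset_univ _)),
    card_union_of_disjoint (disjoint_left.2 (by simp)),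
    card_image_of_injective _ (fun _ _ h => by simpa using h),
    card_image_of_injective _ Sum.inl_injective, card_image_of_injective _ Sum.inl_injective,
    card_univ, card_univ, Fintype.card_fin]

theorem tcard_eq_choose_two_add (k : ℕ) : tcard k = k.choose 2 + k := by
  have : k ≤ k ^ 2 := Nat.le_self_pow two_ne_zero k
  rw [tcard, Nat.choose_two_eq_sq_sub_div_two]
  omega

theorem stmt_4_general (G : SimpleGraph V) [DecidableRel G.Adj] (k n : ℕ)
    (hn : Fintype.card V = n) (hk : 1 < k)
    (Q : Finset V) (hQ : G.IsNClique k Q)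
    (N1 N2 : Finset (NT G k))
    (hN1 : N1 =
      ((Finset.univ : Finset (Fin 1)).image
          (fun z => (Sum.inr (Sum.inr z) : NT G k))) ∪
      ((Finset.univ.filter
          (fun e : EdgeT G => ∀ v, v ∈ (e : Sym2 V) → v ∈ Q)).image
        (fun e => (Sum.inl e : NT G k))))
    (hN2 : N2 =
      ((Finset.univ : Finset (Fin (tcard k))).image
          (fun t => (Sum.inr (Sum.inl t) : NT G k))) ∪
      ((Finset.univ.filter
          (fun e : EdgeT G => ¬ ∀ v, v ∈ (e : Sym2 V) → v ∈ Q)).image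
        (fun e => (Sum.inl e : NT G k)))) :
    load G k N1 = n + G.edgeFinset.card + k ∧
      load G k N2 = n + G.edgeFinset.card + k := by
  have hinside : #(edgesWithin G Q) = k.choose 2 := card_edgesWithin hQ
  have houtside : #(edgesWithin G Q)ᶜ = #G.edgeFinset - k.choose 2 := by
    rw [card_compl, hinside, Fintype.card_coe]
  have hinside_le : k.choose 2 ≤ #G.edgeFinset :=
    hinside ▸ (card_le_univ _).trans_eq (Fintype.card_coe _)
  have hkn : k ≤ n := hn ▸ hQ.card_eq ▸ card_le_univ Q
  constructor
  · rw [hN1]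
    refine (load_T₀_union (edgesWithin G Q)).trans ?_
    rw [coveredVertices_edgesWithin hQ hk, hinside, hQ.card_eq, scard, hn,
      ← Nat.choose_two_eq_sq_sub_div_two]
    omega
  · rw [hN2, ← compl_edgesWithin]
    refine (load_T_union (by rw [tcard_eq_choose_two_add]; omega) _).trans ?_
    rw [houtside, tcard_eq_choose_two_add, hn]
    omega

/-- If `G` contains a `k`-clique `Q`, then for `N¹ = T₀ ∪ {edges inside Q}` and
`N² = T ∪ (W \ {edges inside Q})`, both loads equal `n + |W| + k`. -/
theorem stmt_4 (G : SimpleGraph V) [DecidableRel G.Adj] (k n : ℕ)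
    (hn : Fintype.card V = n) (hk : 1 < k) (hkn : k < n)
    (hkW : (k ^ 2 - k) / 2 < G.edgeFinset.card)
    (Q : Finset V) (hQ : G.IsNClique k Q)
    (N1 N2 : Finset (NT G k))
    (hN1 : N1 =
      ((Finset.univ : Finset (Fin 1)).image
          (fun z => (Sum.inr (Sum.inr z) : NT G k))) ∪
      ((Finset.univ.filter
          (fun e : EdgeT G => ∀ v, v ∈ (e : Sym2 V) → v ∈ Q)).image
        (fun e => (Sum.inl e : NT G k))))
    (hN2 : N2 =
      ((Finset.univ : Finset (Fin (tcard k))).image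
          (fun t => (Sum.inr (Sum.inl t) : NT G k))) ∪
      ((Finset.univ.filter
          (fun e : EdgeT G => ¬ ∀ v, v ∈ (e : Sym2 V) → v ∈ Q)).image
        (fun e => (Sum.inl e : NT G k)))) :
    load G k N1 = n + G.edgeFinset.card + k ∧
      load G k N2 = n + G.edgeFinset.card + k :=
  stmt_4_general G k n hn hk Q hQ N1 N2 hN1 hN2

end CliqueInstance
end

section
/- In the MWPSAS instance constructed from a CLIQUE instance, if there is a partition of N into two nonempty sets N^1, N^2 with f(N^1, N^2) <= n + |W| + k and T_0 ⊆ N^1, then T ∩ N^2 is nonempty. -/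
open Finset

section CliqueInstance

variable {V : Type*} [Fintype V] [DecidableEq V]

/-- If a partition `N¹, N²` of `N` has `f(N¹,N²) ≤ n + |W| + k` and `T₀ ⊆ N¹`,
then `T ∩ N²` is nonempty. -/
theorem stmt_5 (G : SimpleGraph V) [DecidableRel G.Adj] (k n : ℕ)
    (hn : Fintype.card V = n) (hk : 1 < k) (hkn : k < n)
    (hkW : (k ^ 2 - k) / 2 < G.edgeFinset.card)
    (N1 N2 : Finset (NT G k))
    (hne1 : N1.Nonempty) (hne2 : N2.Nonempty) (hdisj : Disjoint N1 N2)
    (hcover : N1 ∪ N2 = Finset.univ)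
    (hf : max (load G k N1) (load G k N2) ≤ n + G.edgeFinset.card + k)
    (hT0 : ∀ z : Fin 1, (Sum.inr (Sum.inr z) : NT G k) ∈ N1) :
    ∃ t : Fin (tcard k), (Sum.inr (Sum.inl t) : NT G k) ∈ N2 := by
  by_contra h
  push_neg at h
  have hT : ∀ t : Fin (tcard k), (Sum.inr (Sum.inl t) : NT G k) ∈ N1 := by
    intro t
    have := mem_univ (Sum.inr (Sum.inl t) : NT G k)
    rw [← hcover, mem_union] at this
    exact this.resolve_right (h t)
  set q := (k ^ 2 - k) / 2 with hq
  have hk2 : k ≤ k ^ 2 := Nat.le_self_pow (by norm_num) k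
  have htc : tcard k = q + k := by
    unfold tcard
    have h2 : k ^ 2 + k = (k ^ 2 - k) + 2 * k := by omega
    rw [h2, Nat.add_mul_div_left _ _ (by norm_num : 0 < 2)]
  have htpos : 0 < tcard k := by omega
  have hsub : (Finset.univ.image (fun t : Fin (tcard k) => (Sum.inr (Sum.inl t) : NT G k)))
      ∪ {(Sum.inr (Sum.inr 0) : NT G k)} ⊆ N1 := by
    intro x hx
    rcases mem_union.mp hx with hx | hx
    · obtain ⟨t, _, rfl⟩ := mem_image.mp hx
      exact hT t
    · rw [mem_singleton.mp hx]; exact hT0 0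
  have hcard1 : tcard k + 1 ≤ N1.card := by
    have hc := card_le_card hsub
    rwa [card_union_of_disjoint (by simp),
      card_image_of_injective _ (fun a b hab => by simpa using hab),
      card_univ, Fintype.card_fin, card_singleton] at hc
  have hbu : (Finset.univ : Finset (MT G k)) ⊆ N1.biUnion (Ma G k) := by
    intro x _
    rw [mem_biUnion]
    rcases x with v | s
    · exact ⟨Sum.inr (Sum.inl ⟨0, htpos⟩), hT _, by simp [Ma]⟩
    · exact ⟨Sum.inr (Sum.inr 0), hT0 0, by simp [Ma]⟩
  have hcard2 : n + scard G k ≤ (N1.biUnion (Ma G k)).card := by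
    have hc := card_le_card hbu
    rwa [card_univ, Fintype.card_sum, hn, Fintype.card_fin] at hc
  have hload : load G k N1 ≤ n + G.edgeFinset.card + k := le_trans (le_max_left _ _) hf
  have hsc : scard G k = n + G.edgeFinset.card - q - 1 := by rw [scard, hn]
  unfold load at hload
  omega

end CliqueInstance
end

section
/- In the MWPSAS instance constructed from a CLIQUE instance, if there is a partition of N into two nonempty sets N^1, N^2 with f(N^1,N^2) <= n + |W| + k and T_0 ⊆ N^1, then T ∩ N^1 = ∅, i.e., T ⊆ N^2. -/
open Finset

section CliqueInstance

variable {V : Type*} [Fintype V] [DecidableEq V]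

/-- If a partition `N¹, N²` of `N` has `f(N¹,N²) ≤ n + |W| + k` and `T₀ ⊆ N¹`,
then `T ∩ N¹ = ∅`, i.e. `T ⊆ N²`. -/
theorem stmt_6 (G : SimpleGraph V) [DecidableRel G.Adj] (k n : ℕ)
    (hn : Fintype.card V = n) (hk : 1 < k) (hkn : k < n)
    (hkW : (k ^ 2 - k) / 2 < G.edgeFinset.card)
    (N1 N2 : Finset (NT G k))
    (hne1 : N1.Nonempty) (hne2 : N2.Nonempty) (hdisj : Disjoint N1 N2)
    (hcover : N1 ∪ N2 = Finset.univ)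
    (hf : max (load G k N1) (load G k N2) ≤ n + G.edgeFinset.card + k)
    (hT0 : ∀ z : Fin 1, (Sum.inr (Sum.inr z) : NT G k) ∈ N1) :
    ∀ t : Fin (tcard k), (Sum.inr (Sum.inl t) : NT G k) ∈ N2 := by
  intro t
  by_contra ht2
  have ht1 : (Sum.inr (Sum.inl t) : NT G k) ∈ N1 := by
    have hmem := Finset.mem_univ (Sum.inr (Sum.inl t) : NT G k)
    rw [← hcover] at hmem
    rcases Finset.mem_union.mp hmem with h | h
    · exact h
    · exact absurd h ht2
  have hle : k ≤ k ^ 2 := Nat.le_self_pow two_ne_zero k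
  have hev : Even (k ^ 2 - k) := by
    rw [Nat.even_sub hle]
    simp [Nat.even_pow]
  obtain ⟨m, hm⟩ := hev
  have hd1 : (k ^ 2 - k) / 2 = m := by omega
  have hd2 : tcard k = m + k := by unfold tcard; omega
  have hs : scard G k + m + 1 = n + G.edgeFinset.card := by
    unfold scard; rw [hn, hd1]; rw [hd1] at hkW; omega
  have hV : ((Finset.univ : Finset V).image (Sum.inl : V → MT G k)).card = n := by
    rw [Finset.card_image_of_injective _ Sum.inl_injective, Finset.card_univ, hn]
  have hbU : N1.biUnion (Ma G k) = Finset.univ := by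
    apply Finset.eq_univ_of_forall
    intro x
    rcases x with v | s
    · exact Finset.mem_biUnion.mpr ⟨_, ht1, by simp [Ma]⟩
    · exact Finset.mem_biUnion.mpr ⟨_, hT0 0, by simp [Ma]⟩
  have hMcard : (Finset.univ : Finset (MT G k)).card = n + scard G k := by
    rw [Finset.card_univ]; simp [hn]
  have h1 : N1.card + (n + scard G k) ≤ n + G.edgeFinset.card + k := by
    have hb := le_trans (le_max_left _ _) hf
    unfold load at hb
    rwa [hbU, hMcard] at hb
  have hNcard : N1.card + N2.card = G.edgeFinset.card + tcard k + 1 := by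
    have h := Finset.card_union_of_disjoint hdisj
    rw [hcover, Finset.card_univ] at h
    have hcN : Fintype.card (NT G k) = G.edgeFinset.card + (tcard k + 1) := by
      simp [Fintype.card_sum, Fintype.card_coe]
    omega
  have hTex : ∃ t' : Fin (tcard k), (Sum.inr (Sum.inl t') : NT G k) ∈ N2 := by
    by_contra hno
    push_neg at hno
    have hall : ∀ t' : Fin (tcard k), (Sum.inr (Sum.inl t') : NT G k) ∈ N1 := by
      intro t'
      have hmem := Finset.mem_univ (Sum.inr (Sum.inl t') : NT G k)
      rw [← hcover] at hmem
      rcases Finset.mem_union.mp hmem with h | h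
      · exact h
      · exact absurd h (hno t')
    have hsub : insert (Sum.inr (Sum.inr 0) : NT G k)
        ((Finset.univ : Finset (Fin (tcard k))).image
          (fun t' => (Sum.inr (Sum.inl t') : NT G k))) ⊆ N1 := by
      intro x hx
      rcases Finset.mem_insert.mp hx with rfl | hx
      · exact hT0 0
      · obtain ⟨t', _, rfl⟩ := Finset.mem_image.mp hx
        exact hall t'
    have hcard := Finset.card_le_card hsub
    have hinj : Function.Injective (fun t' : Fin (tcard k) => (Sum.inr (Sum.inl t') : NT G k)) := by
      intro a b hab
      simpa using hab
    rw [Finset.card_insert_of_notMem (by simp), Finset.card_image_of_injective _ hinj,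
      Finset.card_univ, Fintype.card_fin] at hcard
    omega
  obtain ⟨t', ht'⟩ := hTex
  have hsub2 : (Finset.univ.image (Sum.inl : V → MT G k)) ⊆ N2.biUnion (Ma G k) := by
    intro x hx
    exact Finset.mem_biUnion.mpr ⟨_, ht', by simpa [Ma] using hx⟩
  have h2 : N2.card + n ≤ n + G.edgeFinset.card + k := by
    have hb := le_trans (le_max_right _ _) hf
    unfold load at hb
    have hc := Finset.card_le_card hsub2
    rw [hV] at hc
    omega
  omega

end CliqueInstance
end

section
/- In the MWPSAS instance constructed from a CLIQUE instance, if a partition N^1, N^2 satisfies f(N^1,N^2) <= n + |W| + k with T_0 ⊆ N^1 and T ⊆ N^2, then |W ∩ N^1| = (k^2-k)/2 and the set of vertices covered by edges in W ∩ N^1 has exactly k elements, hence these vertices induce a k-clique in G. -/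
open Finset

section CliqueInstance

variable {V : Type*} [Fintype V] [DecidableEq V]

/-- If a partition `N¹, N²` of `N` has `f(N¹,N²) ≤ n + |W| + k`, `T₀ ⊆ N¹` and
`T ⊆ N²`, then `|W ∩ N¹| = (k² - k)/2`, the set of vertices covered by the
edges in `W ∩ N¹` has exactly `k` elements, and these vertices induce a
`k`-clique in `G`. -/
theorem stmt_7 (G : SimpleGraph V) [DecidableRel G.Adj] (k n : ℕ)
    (hn : Fintype.card V = n) (hk : 1 < k) (hkn : k < n)
    (hkW : (k ^ 2 - k) / 2 < G.edgeFinset.card)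
    (N1 N2 : Finset (NT G k))
    (hne1 : N1.Nonempty) (hne2 : N2.Nonempty) (hdisj : Disjoint N1 N2)
    (hcover : N1 ∪ N2 = Finset.univ)
    (hf : max (load G k N1) (load G k N2) ≤ n + G.edgeFinset.card + k)
    (hT0 : ∀ z : Fin 1, (Sum.inr (Sum.inr z) : NT G k) ∈ N1)
    (hT : ∀ t : Fin (tcard k), (Sum.inr (Sum.inl t) : NT G k) ∈ N2)
    (E1 : Finset (EdgeT G))
    (hE1 : E1 = Finset.univ.filter (fun e : EdgeT G => (Sum.inl e : NT G k) ∈ N1))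
    (Vcov : Finset V)
    (hVcov : Vcov = E1.biUnion (fun e => Finset.univ.filter (fun v => v ∈ (e : Sym2 V)))) :
    E1.card = (k ^ 2 - k) / 2 ∧ Vcov.card = k ∧ G.IsNClique k Vcov := by
  classical
  set m := G.edgeFinset.card with hm
  set e := E1.card with he
  set c := Vcov.card with hc
  -- arithmetic preliminaries
  have hkk : k ^ 2 = k * k := sq k
  obtain ⟨d, hd2⟩ : ∃ d, k * (k - 1) = 2 * d := by
    have h1 : Even ((k - 1) * ((k - 1) + 1)) := Nat.even_mul_succ_self (k - 1)
    have h2 : (k - 1) + 1 = k := by omega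
    rw [h2, Nat.mul_comm] at h1
    exact h1.exists_two_nsmul _
  have hdpow : k ^ 2 - k = 2 * d := by
    have : k * (k - 1) = k * k - k := by
      rw [Nat.mul_sub_one, Nat.mul_comm]
    omega
  have hq : (k ^ 2 - k) / 2 = d := by omega
  have hkle : k ≤ k ^ 2 := Nat.le_self_pow two_ne_zero k
  have ht : tcard k = d + k := by
    show (k ^ 2 + k) / 2 = d + k
    omega
  have hdm : d < m := by rw [hq] at hkW; exact hkW
  have hs : scard G k = n + m - d - 1 := by
    show Fintype.card V + G.edgeFinset.card - (k ^ 2 - k) / 2 - 1 = n + m - d - 1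
    rw [hn, hq]
  -- membership characterizations
  have hmem : ∀ x : NT G k, x ∈ N2 ↔ x ∉ N1 := by
    intro x
    constructor
    · intro h2 h1
      exact Finset.disjoint_left.mp hdisj h1 h2
    · intro h1
      have hx : x ∈ N1 ∪ N2 := by rw [hcover]; exact mem_univ x
      rcases mem_union.mp hx with h | h
      · exact absurd h h1
      · exact h
  have hnotT1 : ∀ t : Fin (tcard k), (Sum.inr (Sum.inl t) : NT G k) ∉ N1 := fun t h =>
    Finset.disjoint_left.mp hdisj h (hT t)
  have hEdge1 : ∀ ed : EdgeT G, (Sum.inl ed : NT G k) ∈ N1 ↔ ed ∈ E1 := by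
    intro ed; rw [hE1]; simp
  -- N1 as explicit set
  have hN1 : N1 = (E1.image Sum.inl) ∪ {(Sum.inr (Sum.inr 0) : NT G k)} := by
    ext x
    rcases x with ed | t | z
    · simp only [mem_union, mem_image, mem_singleton]
      constructor
      · intro h; exact Or.inl ⟨ed, (hEdge1 ed).mp h, rfl⟩
      · rintro (⟨a, ha, hh⟩ | hh)
        · simp only [Sum.inl.injEq] at hh
          subst hh; exact (hEdge1 _).mpr ha
        · exact absurd hh Sum.inl_ne_inr
    · simp only [mem_union, mem_image, mem_singleton]
      constructor
      · intro h; exact absurd h (hnotT1 t)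
      · rintro (⟨a, _, hh⟩ | hh)
        · exact absurd hh Sum.inl_ne_inr
        · simp only [Sum.inr.injEq] at hh
          exact absurd hh Sum.inl_ne_inr
    · have hz : z = 0 := Subsingleton.elim z 0
      subst hz
      simp only [mem_union, mem_image, mem_singleton]
      exact ⟨fun _ => Or.inr (by simp), fun _ => hT0 0⟩
  have hcardN1 : N1.card = e + 1 := by
    rw [hN1, Finset.card_union_of_disjoint (by simp), Finset.card_image_of_injective _ Sum.inl_injective, Finset.card_singleton]
  have hmE : Fintype.card (EdgeT G) = m := Fintype.card_coe G.edgeFinset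
  have hcardU : (Finset.univ : Finset (NT G k)).card = m + (tcard k + 1) := by
    rw [Finset.card_univ, Fintype.card_sum, Fintype.card_sum, Fintype.card_fin,
      Fintype.card_fin, hmE]
  have hcard12 : N1.card + N2.card = m + (tcard k + 1) := by
    rw [← Finset.card_union_of_disjoint hdisj, hcover, hcardU]
  have hem : e ≤ m := by
    rw [he, hm, ← Fintype.card_coe G.edgeFinset, ← Finset.card_univ]
    exact Finset.card_le_univ E1
  -- biUnion of N2
  have htpos : 0 < tcard k := by omega
  have hB2 : N2.biUnion (Ma G k) = Finset.univ.image (Sum.inl : V → MT G k) := by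
    apply Finset.Subset.antisymm
    · intro x hx
      rcases mem_biUnion.mp hx with ⟨i, hi, hxi⟩
      rcases i with ed | t | z
      · simp only [Ma, mem_image, mem_filter] at hxi ⊢
        obtain ⟨v, _, rfl⟩ := hxi
        exact ⟨v, mem_univ v, rfl⟩
      · simpa only [Ma] using hxi
      · exact absurd (hT0 z) ((hmem _).mp hi)
    · intro x hx
      exact mem_biUnion.mpr ⟨Sum.inr (Sum.inl ⟨0, htpos⟩), hT _, by simpa only [Ma] using hx⟩
  have hcardB2 : (N2.biUnion (Ma G k)).card = n := by
    rw [hB2, Finset.card_image_of_injective _ Sum.inl_injective, Finset.card_univ, hn]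
  -- load of N2 bound
  have hload2 : N2.card + n ≤ n + m + k := by
    have := le_trans (le_max_right (load G k N1) (load G k N2)) hf
    rw [load, hcardB2] at this
    exact this
  have hde : d ≤ e := by omega
  -- biUnion of N1
  have hB1 : N1.biUnion (Ma G k) =
      (Vcov.image (Sum.inl : V → MT G k)) ∪ (Finset.univ.image (Sum.inr : Fin (scard G k) → MT G k)) := by
    apply Finset.Subset.antisymm
    · intro x hx
      rcases mem_biUnion.mp hx with ⟨i, hi, hxi⟩
      rcases i with ed | t | z
      · simp only [Ma, mem_image, mem_filter] at hxi
        obtain ⟨v, ⟨_, hv⟩, rfl⟩ := hxi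
        apply mem_union_left
        refine mem_image.mpr ⟨v, ?_, rfl⟩
        rw [hVcov]
        exact mem_biUnion.mpr ⟨ed, (hEdge1 ed).mp hi, by simp [hv]⟩
      · exact absurd hi (hnotT1 t)
      · exact mem_union_right _ (by simpa only [Ma] using hxi)
    · intro x hx
      rcases mem_union.mp hx with hx | hx
      · obtain ⟨v, hv, rfl⟩ := mem_image.mp hx
        rw [hVcov] at hv
        obtain ⟨ed, hed, hved⟩ := mem_biUnion.mp hv
        refine mem_biUnion.mpr ⟨Sum.inl ed, (hEdge1 ed).mpr hed, ?_⟩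
        simp only [Ma, mem_image]
        exact ⟨v, hved, rfl⟩
      · exact mem_biUnion.mpr ⟨Sum.inr (Sum.inr 0), hT0 0, by simpa only [Ma] using hx⟩
  have hcardB1 : (N1.biUnion (Ma G k)).card = c + scard G k := by
    rw [hB1, Finset.card_union_of_disjoint, Finset.card_image_of_injective _ Sum.inl_injective,
      Finset.card_image_of_injective _ Sum.inr_injective, Finset.card_univ, Fintype.card_fin]
    simp [Finset.disjoint_left]
  have hload1 : (e + 1) + (c + scard G k) ≤ n + m + k := by
    have h := le_trans (le_max_left (load G k N1) (load G k N2)) hf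
    rw [load, hcardB1, hcardN1] at h
    exact h
  have heck : e + c ≤ d + k := by omega
  -- edges of E1 live in the non-diagonal part of Vcov.sym2
  have hVc : ∀ (ed : EdgeT G), ed ∈ E1 → ∀ a ∈ (ed : Sym2 V), a ∈ Vcov := by
    intro ed hed a ha
    rw [hVcov]
    exact mem_biUnion.mpr ⟨ed, hed, by simp [ha]⟩
  set D2 : Finset (Sym2 V) := Vcov.sym2 \ Vcov.image Sym2.diag with hD2
  have hsub : E1.image (Subtype.val : EdgeT G → Sym2 V) ⊆ D2 := by
    intro a ha
    obtain ⟨ed, hed, rfl⟩ := mem_image.mp ha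
    rw [hD2, mem_sdiff]
    constructor
    · exact Finset.mem_sym2_iff.mpr (hVc ed hed)
    · intro hdiag
      obtain ⟨b, _, hb⟩ := mem_image.mp hdiag
      have : ¬ (ed : Sym2 V).IsDiag :=
        G.not_isDiag_of_mem_edgeSet (SimpleGraph.mem_edgeFinset.mp ed.2)
      exact this (hb ▸ Sym2.diag_isDiag b)
  have hdiagsub : Vcov.image Sym2.diag ⊆ Vcov.sym2 := by
    intro a ha
    obtain ⟨b, hb, rfl⟩ := mem_image.mp ha
    exact Finset.mk_mem_sym2_iff.mpr ⟨hb, hb⟩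
  have hceven : ∃ w, c * (c - 1) = 2 * w := by
    rcases Nat.even_or_odd c with hce | hco
    · obtain ⟨w, hw⟩ := hce
      exact ⟨w * (c - 1), by rw [hw]; ring⟩
    · have : Even (c - 1) := by
        rcases hco with ⟨w, hw⟩; exact ⟨w, by omega⟩
      obtain ⟨w, hw⟩ := this
      exact ⟨c * w, by rw [hw]; ring⟩
  obtain ⟨w, hw⟩ := hceven
  have hprod : (c + 1) * c = c * (c - 1) + 2 * c := by
    cases c with
    | zero => rfl
    | succ p => simp only [Nat.succ_sub_one]; ring
  have hD2card : D2.card = c.choose 2 := by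
    rw [hD2, Finset.card_sdiff_of_subset hdiagsub, Finset.card_sym2,
      Finset.card_image_of_injective _ Sym2.diag_injective, ← hc]
    have h1 := Nat.choose_two_right (c + 1)
    have h2 := Nat.choose_two_right c
    simp only [Nat.add_sub_cancel] at h1
    omega
  have hec : e ≤ c.choose 2 := by
    have h1 : (E1.image (Subtype.val : EdgeT G → Sym2 V)).card = e := by
      rw [he]
      exact Finset.card_image_of_injective _ Subtype.val_injective
    rw [← h1, ← hD2card]
    exact Finset.card_le_card hsub
  have h2e : 2 * e ≤ c * (c - 1) := by
    have := Nat.choose_two_right c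
    omega
  -- now the arithmetic conclusion
  have hck : c = k := by
    have hkc : k ≤ c := by
      by_contra hlt
      push_neg at hlt
      have h1 : c ≤ k - 1 := by omega
      have h2 : c - 1 ≤ k - 2 := by omega
      have h3 : c * (c - 1) ≤ (k - 1) * (k - 2) := Nat.mul_le_mul h1 h2
      have h4 : (k - 1) * (k - 2) + (k - 1) * 2 = (k - 1) * k := by
        rw [← Nat.mul_add]; congr 1; omega
      have h6 : 0 < k - 1 := by omega
      have h5 : (k - 1) * k = 2 * d := by rw [Nat.mul_comm]; exact hd2
      omega
    omega
  have hed' : e = d := by omega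
  have hchk : k.choose 2 = d := by
    have := Nat.choose_two_right k
    omega
  refine ⟨by omega, hck, ?_⟩
  -- the clique
  have hEimg : E1.image (Subtype.val : EdgeT G → Sym2 V) = D2 := by
    apply Finset.eq_of_subset_of_card_le hsub
    rw [hD2card, Finset.card_image_of_injective _ Subtype.val_injective, hck, hchk]
    omega
  rw [SimpleGraph.isNClique_iff]
  constructor
  · intro u hu v hv huv
    have huv' : s(u, v) ∈ D2 := by
      rw [hD2, mem_sdiff]
      constructor
      · exact Finset.mk_mem_sym2_iff.mpr ⟨hu, hv⟩
      · intro hdiag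
        obtain ⟨b, _, hb⟩ := mem_image.mp hdiag
        have : Sym2.IsDiag s(u, v) := hb ▸ Sym2.diag_isDiag b
        exact huv (Sym2.mk_isDiag_iff.mp this)
    rw [← hEimg] at huv'
    obtain ⟨ed, _, hval⟩ := mem_image.mp huv'
    have : s(u, v) ∈ G.edgeSet := by
      rw [← hval]
      exact SimpleGraph.mem_edgeFinset.mp ed.2
    exact G.mem_edgeSet.mp this
  · exact hck

end CliqueInstance
end

section
/- In the MWPSAS_M1 instance constructed from a 3-PARTITION instance, if there is a partition of N into m nonempty subsets N^1,...,N^m with f(N^1,...,N^m) <= B, then each part satisfies sum_{i in N^e} p_i + sum_{j in union_{i in N^e} M(i)} p_j = B exactly. -/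
open Finset

section ThreePartition

variable (r B : ℕ) (a : Fin (3 * r) → ℕ)

/-- `N` is the disjoint union of sets `A_k` with `|A_k| = a_k - 1`, as a type. -/
abbrev NT3 := Σ k : Fin (3 * r), Fin (a k - 1)

/-- The associated subset of `i ∈ A_k` is `{j_k}` (with `M = Fin (3r)`). -/
def Ma3 (i : NT3 r a) : Finset (Fin (3 * r)) := {i.1}

/-- Load of a part (unit weights): `|P| + |⋃_{i ∈ P} M(i)|`. -/
def load3 (P : Finset (NT3 r a)) : ℕ := P.card + (P.biUnion (Ma3 r a)).card

/-- In the MWPSAS_M1 instance built from a 3-PARTITION instance, if a partition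
of `N` into `r` nonempty parts has objective value at most `B`, then every part
has load exactly `B`. -/
theorem stmt_9 (ha1 : ∀ k, 1 < a k) (hsum : ∑ k, a k = r * B)
    (hlow : ∀ k, B < 4 * a k) (hhigh : ∀ k, 2 * a k < B)
    (P : Fin r → Finset (NT3 r a))
    (hPne : ∀ e, (P e).Nonempty)
    (hPdisj : ∀ e e', e ≠ e' → Disjoint (P e) (P e'))
    (hPcover : Finset.univ.biUnion P = Finset.univ)
    (hf : Finset.univ.sup (fun e => load3 r a (P e)) ≤ B) :
    ∀ e, load3 r a (P e) = B := by
  classical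
  have hle : ∀ e, load3 r a (P e) ≤ B := fun e =>
    le_trans (Finset.le_sup (f := fun e => load3 r a (P e)) (Finset.mem_univ e)) hf
  -- total count of elements
  have hS : ∑ e, (P e).card = Fintype.card (NT3 r a) := by
    rw [← Finset.card_biUnion (fun e _ e' _ h => hPdisj e e' h), hPcover,
      Finset.card_univ]
  have hcardN : Fintype.card (NT3 r a) + 3 * r = r * B := by
    rw [Fintype.card_sigma]
    have : ∀ k : Fin (3 * r), Fintype.card (Fin (a k - 1)) = a k - 1 := fun k =>
      Fintype.card_fin _
    calc (∑ k, Fintype.card (Fin (a k - 1))) + 3 * r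
        = ∑ k : Fin (3 * r), ((a k - 1) + 1) := by
          simp [Finset.sum_add_distrib, Fintype.card_fin, mul_comm]
      _ = ∑ k, a k := by
          refine Finset.sum_congr rfl fun k _ => ?_
          have := ha1 k; omega
      _ = r * B := hsum
  -- biUnion is image of fst
  have himg : ∀ e, (P e).biUnion (Ma3 r a) = (P e).image Sigma.fst := by
    intro e; ext k; simp [Ma3, eq_comm]
  -- coverage of all k
  have hcov : (3 : ℕ) * r ≤ ∑ e, ((P e).biUnion (Ma3 r a)).card := by
    have hsub : (Finset.univ : Finset (Fin (3 * r))) ⊆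
        Finset.univ.biUnion (fun e => (P e).biUnion (Ma3 r a)) := by
      intro k _
      have hpos : 0 < a k - 1 := by have := ha1 k; omega
      have hx : (⟨k, ⟨0, hpos⟩⟩ : NT3 r a) ∈ Finset.univ.biUnion P := by
        rw [hPcover]; exact Finset.mem_univ _
      rcases Finset.mem_biUnion.1 hx with ⟨e, _, he⟩
      refine Finset.mem_biUnion.2 ⟨e, Finset.mem_univ _, ?_⟩
      rw [himg]
      exact Finset.mem_image.2 ⟨_, he, rfl⟩
    calc (3 : ℕ) * r = (Finset.univ : Finset (Fin (3 * r))).card := by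
          simp
      _ ≤ (Finset.univ.biUnion (fun e => (P e).biUnion (Ma3 r a))).card :=
          Finset.card_le_card hsub
      _ ≤ ∑ e, ((P e).biUnion (Ma3 r a)).card := Finset.card_biUnion_le
  have hsumload : r * B ≤ ∑ e, load3 r a (P e) := by
    have : ∑ e, load3 r a (P e)
        = (∑ e, (P e).card) + ∑ e, ((P e).biUnion (Ma3 r a)).card := by
      simp [load3, Finset.sum_add_distrib]
    omega
  have hub : ∑ e, load3 r a (P e) ≤ r * B := by
    calc ∑ e, load3 r a (P e) ≤ ∑ _e : Fin r, B :=
          Finset.sum_le_sum (fun e _ => hle e)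
      _ = r * B := by simp [mul_comm]
  intro e
  by_contra hne
  have hlt : load3 r a (P e) < B := lt_of_le_of_ne (hle e) hne
  have : ∑ e, load3 r a (P e) < ∑ _e : Fin r, B :=
    Finset.sum_lt_sum (fun i _ => hle i) ⟨e, Finset.mem_univ e, hlt⟩
  simp [mul_comm] at this
  omega


end ThreePartition
end

section
/- In the MWPSAS_M1 instance constructed from a 3-PARTITION instance, if a partition N^1,...,N^m achieves f(N^1,...,N^m) <= B, then for each k the set A_k is entirely contained in a single part N^c, namely the unique part whose union of associated subsets contains j_k. -/
open Finset

section ThreePartition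

variable (r B : ℕ) (a : Fin (3 * r) → ℕ)

/-- In the MWPSAS_M1 instance built from a 3-PARTITION instance, if a partition
achieves objective value at most `B`, then for each `k` the whole set `A_k` is
contained in a single part `N^c`, namely the unique part whose union of
associated subsets contains `j_k`. -/
theorem stmt_10 (ha1 : ∀ k, 1 < a k) (hsum : ∑ k, a k = r * B)
    (hlow : ∀ k, B < 4 * a k) (hhigh : ∀ k, 2 * a k < B)
    (P : Fin r → Finset (NT3 r a))
    (hPne : ∀ e, (P e).Nonempty)
    (hPdisj : ∀ e e', e ≠ e' → Disjoint (P e) (P e'))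
    (hPcover : Finset.univ.biUnion P = Finset.univ)
    (hf : Finset.univ.sup (fun e => load3 r a (P e)) ≤ B) :
    ∀ k : Fin (3 * r), ∃ c : Fin r,
      k ∈ (P c).biUnion (Ma3 r a) ∧
      (∀ i : Fin (a k - 1), (⟨k, i⟩ : NT3 r a) ∈ P c) ∧
      (∀ c' : Fin r, k ∈ (P c').biUnion (Ma3 r a) → c' = c) := by
  classical
  set Q : Fin r → Finset (Fin (3 * r)) := fun e => (P e).biUnion (Ma3 r a) with hQ
  set t : Fin (3 * r) → ℕ :=
    fun k => (Finset.univ.filter (fun e => k ∈ Q e)).card with ht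
  -- any element of N lies in some part, and then k is touched by that part
  have hmem : ∀ (x : NT3 r a), ∃ e, x ∈ P e := by
    intro x
    have : x ∈ Finset.univ.biUnion P := by rw [hPcover]; exact Finset.mem_univ x
    simpa using this
  have htouch : ∀ (x : NT3 r a) (e : Fin r), x ∈ P e → x.1 ∈ Q e := by
    intro x e hx
    exact Finset.mem_biUnion.2 ⟨x, hx, by simp [Ma3]⟩
  -- every k is touched by at least one part
  have ht1 : ∀ k, 1 ≤ t k := by
    intro k
    have hk : 0 < a k - 1 := by have := ha1 k; omega
    obtain ⟨e, he⟩ := hmem ⟨k, ⟨0, hk⟩⟩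
    have : e ∈ Finset.univ.filter (fun e => k ∈ Q e) := by
      simp only [Finset.mem_filter, Finset.mem_univ, true_and]
      exact htouch _ e he
    exact Finset.card_pos.2 ⟨e, this⟩
  -- sum of loads is at most r * B
  have hload : ∑ e, load3 r a (P e) ≤ r * B := by
    calc ∑ e, load3 r a (P e) ≤ ∑ _e : Fin r, B :=
          Finset.sum_le_sum (fun e _ => le_trans (Finset.le_sup (f := fun e => load3 r a (P e)) (Finset.mem_univ e)) hf)
      _ = r * B := by simp [mul_comm]
  -- the parts partition N
  have hsumP : ∑ e, (P e).card = Fintype.card (NT3 r a) := by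
    rw [← Finset.card_biUnion (fun e _ e' _ h => hPdisj e e' h), hPcover, Finset.card_univ]
  -- card of N
  have hcardN : Fintype.card (NT3 r a) + 3 * r = r * B := by
    rw [Fintype.card_sigma]
    simp only [Fintype.card_fin]
    have : ∑ k : Fin (3 * r), (a k - 1) + 3 * r = ∑ k : Fin (3 * r), (a k - 1 + 1) := by
      rw [Finset.sum_add_distrib]
      simp
    rw [this, ← hsum]
    exact Finset.sum_congr rfl (fun k _ => by have := ha1 k; omega)
  -- swap sums
  have hswap : ∑ e, (Q e).card = ∑ k, t k := by
    simp only [ht]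
    have h1 : ∀ e : Fin r, (Q e).card = ∑ k : Fin (3 * r), if k ∈ Q e then 1 else 0 := by
      intro e
      rw [← Finset.card_filter]
      congr 1
      ext k
      simp
    have h2 : ∀ k : Fin (3 * r),
        (Finset.univ.filter (fun e => k ∈ Q e)).card
          = ∑ e : Fin r, if k ∈ Q e then 1 else 0 :=
      fun k => Finset.card_filter _ _
    simp only [h1, h2]
    exact Finset.sum_comm
  -- total touched count is at most 3r
  have hsumt : ∑ k, t k ≤ 3 * r := by
    have hL : ∑ e, load3 r a (P e) = Fintype.card (NT3 r a) + ∑ k, t k := by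
      unfold load3
      rw [Finset.sum_add_distrib, hsumP, ← hswap]
    omega
  -- hence each t k = 1
  have htk : ∀ k, t k = 1 := by
    have h3r : (3 * r : ℕ) = ∑ _k : Fin (3 * r), 1 := by simp
    have hle : ∑ k, (1 : ℕ) ≤ ∑ k, t k := Finset.sum_le_sum (fun k _ => ht1 k)
    have heq : ∑ k, (1 : ℕ) = ∑ k, t k := le_antisymm hle (by omega)
    have := (Finset.sum_eq_sum_iff_of_le (fun k _ => ht1 k)).1 heq
    intro k
    exact (this k (Finset.mem_univ k)).symm
  intro k
  obtain ⟨c, hc⟩ := Finset.card_eq_one.1 (htk k)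
  have hcmem : ∀ e : Fin r, k ∈ Q e ↔ e = c := by
    intro e
    constructor
    · intro he
      have : e ∈ Finset.univ.filter (fun e => k ∈ Q e) := by
        simp only [Finset.mem_filter, Finset.mem_univ, true_and]; exact he
      rw [hc] at this
      simpa using this
    · intro he
      rw [he]
      have : c ∈ Finset.univ.filter (fun e => k ∈ Q e) := by
        rw [hc]; simp
      simpa using this
  refine ⟨c, (hcmem c).2 rfl, ?_, fun c' hc' => (hcmem c').1 hc'⟩
  intro i
  obtain ⟨e, he⟩ := hmem ⟨k, i⟩
  have : e = c := (hcmem e).1 (htouch ⟨k, i⟩ e he)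
  rwa [this] at he

end ThreePartition
end

section
/- The 3-PARTITION instance has a solution if and only if the constructed MWPSAS_M1 instance has a partition of N into r nonempty subsets with objective value at most B. That is, there exist sets Z_1,...,Z_r partitioning {1,...,3r} with sum_{k in Z_e} a_k = B for each e if and only if there exists a partition N^1,...,N^r of N with f(N^1,...,N^r) <= B. -/
open Finset

section ThreePartition

variable (r B : ℕ) (a : Fin (3 * r) → ℕ)

lemma biUnion_Ma3 (P : Finset (NT3 r a)) :
    P.biUnion (Ma3 r a) = P.image Sigma.fst :=
  Finset.biUnion_singleton

/-- The 3-PARTITION instance has a solution iff the constructed MWPSAS_M1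
instance admits a partition of `N` into `r` nonempty subsets with objective
value at most `B`. -/
theorem stmt_11 (ha1 : ∀ k, 1 < a k) (hsum : ∑ k, a k = r * B)
    (hlow : ∀ k, B < 4 * a k) (hhigh : ∀ k, 2 * a k < B) :
    (∃ Z : Fin r → Finset (Fin (3 * r)),
        (∀ e e', e ≠ e' → Disjoint (Z e) (Z e')) ∧
        Finset.univ.biUnion Z = Finset.univ ∧
        (∀ e, ∑ k ∈ Z e, a k = B)) ↔
      (∃ P : Fin r → Finset (NT3 r a),
        (∀ e, (P e).Nonempty) ∧
        (∀ e e', e ≠ e' → Disjoint (P e) (P e')) ∧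
        Finset.univ.biUnion P = Finset.univ ∧
        Finset.univ.sup (fun e => load3 r a (P e)) ≤ B) := by
  constructor
  · -- forward direction
    rintro ⟨Z, hZdisj, hZcov, hZsum⟩
    have hBpos : ∀ _ : Fin r, 0 < B := by
      intro e
      have hr : 0 < r := e.pos
      have k0 : Fin (3 * r) := ⟨0, by omega⟩
      have := ha1 k0
      have := hhigh k0
      omega
    refine ⟨fun e => univ.filter (fun i => i.1 ∈ Z e), ?_, ?_, ?_, ?_⟩
    · intro e
      have hZne : (Z e).Nonempty := by
        by_contra h
        rw [Finset.not_nonempty_iff_eq_empty] at h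
        have := hZsum e
        rw [h] at this
        simp at this
        have := hBpos e
        omega
      obtain ⟨k, hk⟩ := hZne
      exact ⟨⟨k, ⟨0, by have := ha1 k; omega⟩⟩, by simp [hk]⟩
    · intro e e' hee
      rw [Finset.disjoint_left]
      intro i hi hi'
      simp only [mem_filter] at hi hi'
      exact (Finset.disjoint_left.1 (hZdisj e e' hee)) hi.2 hi'.2
    · ext i
      simp only [mem_biUnion, mem_filter, mem_univ, true_and, iff_true]
      have : i.1 ∈ Finset.univ.biUnion Z := by rw [hZcov]; exact mem_univ _
      obtain ⟨e, _, he⟩ := mem_biUnion.1 this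
      exact ⟨e, he⟩
    · apply Finset.sup_le
      intro e _
      have himg : (univ.filter (fun i : NT3 r a => i.1 ∈ Z e)).image Sigma.fst = Z e := by
        ext k
        simp only [mem_image, mem_filter, mem_univ, true_and]
        constructor
        · rintro ⟨i, hi, rfl⟩; exact hi
        · intro hk
          exact ⟨⟨k, ⟨0, by have := ha1 k; omega⟩⟩, hk, rfl⟩
      have hsig : univ.filter (fun i : NT3 r a => i.1 ∈ Z e)
          = (Z e).sigma (fun k => (univ : Finset (Fin (a k - 1)))) := by
        ext i
        simp [Finset.mem_sigma]
      have hcard : (univ.filter (fun i : NT3 r a => i.1 ∈ Z e)).card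
          = ∑ k ∈ Z e, (a k - 1) := by
        rw [hsig, Finset.card_sigma]
        simp
      rw [load3, biUnion_Ma3, himg, hcard]
      have : ∑ k ∈ Z e, (a k - 1) + (Z e).card = ∑ k ∈ Z e, a k := by
        rw [Finset.card_eq_sum_ones, ← Finset.sum_add_distrib]
        exact Finset.sum_congr rfl fun k _ => by have := ha1 k; omega
      rw [this, hZsum e]
  · -- reverse direction
    rintro ⟨P, hPne, hPdisj, hPcov, hPsup⟩
    set touch : Fin r → Finset (Fin (3 * r)) := fun e => (P e).image Sigma.fst with htouch
    -- every element of N lies in some part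
    have hmem : ∀ i : NT3 r a, ∃ e, i ∈ P e := by
      intro i
      have : i ∈ Finset.univ.biUnion P := by rw [hPcov]; exact mem_univ _
      obtain ⟨e, _, he⟩ := mem_biUnion.1 this
      exact ⟨e, he⟩
    -- counting function
    set cnt : Fin (3 * r) → ℕ := fun k => (univ.filter (fun e => k ∈ touch e)).card with hcnt
    have hcnt1 : ∀ k, 1 ≤ cnt k := by
      intro k
      obtain ⟨e, he⟩ := hmem ⟨k, ⟨0, by have := ha1 k; omega⟩⟩
      have : e ∈ univ.filter (fun e => k ∈ touch e) := by
        simp only [mem_filter, mem_univ, true_and, htouch, mem_image]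
        exact ⟨_, he, rfl⟩
      exact Finset.card_pos.2 ⟨e, this⟩
    -- sum of part sizes
    have hsumP : ∑ e, (P e).card = ∑ k, (a k - 1) := by
      rw [← Finset.card_biUnion (fun x _ y _ h => hPdisj x y h), hPcov, Finset.card_univ]
      rw [Fintype.card_sigma]
      simp
    -- double counting of touch sizes
    have hsumT : ∑ e, (touch e).card = ∑ k, cnt k := by
      have h1 : ∀ e : Fin r, (touch e).card = ∑ k, if k ∈ touch e then 1 else 0 := by
        intro e
        rw [← Finset.card_filter]
        congr 1
        ext k
        simp
      have h2 : ∀ k : Fin (3 * r), cnt k = ∑ e, if k ∈ touch e then 1 else 0 := by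
        intro k
        exact Finset.card_filter _ _
      simp_rw [h1, h2]
      exact Finset.sum_comm
    -- each load is at most B
    have hloadle : ∀ e, load3 r a (P e) ≤ B := fun e =>
      le_trans (Finset.le_sup (f := fun e => load3 r a (P e)) (mem_univ e)) hPsup
    -- sum of loads
    have hsumload : ∑ e, load3 r a (P e) = ∑ k, (a k - 1) + ∑ k, cnt k := by
      unfold load3
      rw [Finset.sum_add_distrib, hsumP, ← hsumT]
      congr 1
      exact Finset.sum_congr rfl fun e _ => by rw [biUnion_Ma3]
    have hsum' : ∑ k, (a k - 1) + ∑ _k : Fin (3 * r), (1 : ℕ) = ∑ k, a k := by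
      rw [← Finset.sum_add_distrib]
      exact Finset.sum_congr rfl fun k _ => by have := ha1 k; omega
    have hcard3r : ∑ k : Fin (3 * r), (1 : ℕ) = 3 * r := by simp
    have hloadtot : ∑ e, load3 r a (P e) ≤ r * B := by
      calc ∑ e, load3 r a (P e) ≤ ∑ _e : Fin r, B := Finset.sum_le_sum fun e _ => hloadle e
      _ = r * B := by simp [mul_comm]
    -- hence ∑ cnt ≤ 3r, so cnt k = 1 for all k
    have hcntsum : ∑ k, cnt k ≤ 3 * r := by omega
    have hcnteq : ∀ k, cnt k = 1 := by
      by_contra h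
      push_neg at h
      obtain ⟨k0, hk0⟩ := h
      have h1 : 1 < cnt k0 := lt_of_le_of_ne (hcnt1 k0) (Ne.symm hk0)
      have : ∑ k : Fin (3 * r), (1 : ℕ) < ∑ k, cnt k :=
        Finset.sum_lt_sum (fun k _ => hcnt1 k) ⟨k0, mem_univ k0, h1⟩
      omega
    have hcntall : ∑ k, cnt k = 3 * r := by
      rw [Finset.sum_congr rfl fun k _ => hcnteq k]; simp
    -- each load equals B
    have hloadeq : ∀ e, load3 r a (P e) = B := by
      by_contra h
      push_neg at h
      obtain ⟨e0, he0⟩ := h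
      have h1 : load3 r a (P e0) < B := lt_of_le_of_ne (hloadle e0) he0
      have : ∑ e, load3 r a (P e) < ∑ _e : Fin r, B :=
        Finset.sum_lt_sum (fun e _ => hloadle e) ⟨e0, mem_univ e0, h1⟩
      have h2 : ∑ _e : Fin r, B = r * B := by simp [mul_comm]
      omega
    -- uniqueness of the touching part
    have huniq : ∀ (k : Fin (3 * r)) (e e' : Fin r),
        k ∈ touch e → k ∈ touch e' → e = e' := by
      intro k e e' he he'
      have hc := hcnteq k
      rw [hcnt] at hc
      have h1 : e ∈ univ.filter (fun e => k ∈ touch e) := by simp [he]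
      have h2 : e' ∈ univ.filter (fun e => k ∈ touch e) := by simp [he']
      exact Finset.card_le_one.1 (le_of_eq hc) e h1 e' h2
    refine ⟨touch, ?_, ?_, ?_⟩
    · intro e e' hee
      rw [Finset.disjoint_left]
      intro k hk hk'
      exact hee (huniq k e e' hk hk')
    · ext k
      simp only [mem_biUnion, mem_univ, iff_true]
      obtain ⟨e, he⟩ := hmem ⟨k, ⟨0, by have := ha1 k; omega⟩⟩
      exact ⟨e, trivial, by simp only [htouch, mem_image]; exact ⟨_, he, rfl⟩⟩
    · intro e
      -- P e is exactly the union of the blocks it touches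
      have hPe : P e = (touch e).sigma (fun k => (univ : Finset (Fin (a k - 1)))) := by
        ext i
        simp only [Finset.mem_sigma, mem_univ, and_true]
        constructor
        · intro hi
          simp only [htouch, mem_image]
          exact ⟨i, hi, rfl⟩
        · intro hi
          obtain ⟨e', he'⟩ := hmem i
          have : i.1 ∈ touch e' := by simp only [htouch, mem_image]; exact ⟨i, he', rfl⟩
          rwa [huniq i.1 e' e this hi] at he'
      have hcardPe : (P e).card = ∑ k ∈ touch e, (a k - 1) := by
        rw [hPe, Finset.card_sigma]; simp
      have hload := hloadeq e
      rw [load3, biUnion_Ma3, hcardPe] at hload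
      rw [← hload]
      rw [Finset.card_eq_sum_ones, ← Finset.sum_add_distrib]
      exact Finset.sum_congr rfl fun k _ => by have := ha1 k; omega

end ThreePartition
end

section
/- The 3-PARTITION instance has a solution if and only if the constructed MWPSAS_N1 instance has a partition of N into r nonempty subsets with objective value at most B, where N = {i_1,...,i_{3r}}, M is the disjoint union of sets A_1,...,A_{3r} with |A_k| = a_k - 1, and M(i_k) = A_k. -/
open Finset

section ThreePartitionN1

variable (r B : ℕ) (a : Fin (3 * r) → ℕ)

/-- `M` is the disjoint union of sets `A_k` with `|A_k| = a_k - 1`, as a type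
(here `N = Fin (3r)`, its elements being `i_1, ..., i_{3r}`). -/
abbrev MT3 := Σ k : Fin (3 * r), Fin (a k - 1)

/-- The associated subset of `i_k` is `A_k`. -/
def MaN1 (k : Fin (3 * r)) : Finset (MT3 r a) :=
  Finset.univ.image (fun i : Fin (a k - 1) => (⟨k, i⟩ : MT3 r a))

/-- Load of a part (unit weights): `|P| + |⋃_{i ∈ P} M(i)|`. -/
def loadN1 (P : Finset (Fin (3 * r))) : ℕ := P.card + (P.biUnion (MaN1 r a)).card

lemma load_eq (r : ℕ) (a : Fin (3 * r) → ℕ) (ha1 : ∀ k, 1 < a k)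
    (P : Finset (Fin (3 * r))) : loadN1 r a P = ∑ k ∈ P, a k := by
  have hcard : ∀ k, (MaN1 r a k).card = a k - 1 := by
    intro k
    rw [MaN1, Finset.card_image_of_injective _ sigma_mk_injective, Finset.card_univ,
      Fintype.card_fin]
  have hdisj : ∀ k ∈ P, ∀ k' ∈ P, k ≠ k' → Disjoint (MaN1 r a k) (MaN1 r a k') := by
    intro k _ k' _ hkk'
    rw [Finset.disjoint_left]
    rintro x hx hx'
    simp only [MaN1, Finset.mem_image, Finset.mem_univ, true_and] at hx hx'
    obtain ⟨i, rfl⟩ := hx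
    obtain ⟨j, hj⟩ := hx'
    exact hkk' (congrArg Sigma.fst hj).symm
  rw [loadN1, Finset.card_biUnion hdisj, Finset.card_eq_sum_ones P,
    ← Finset.sum_add_distrib]
  refine Finset.sum_congr rfl fun k _ => ?_
  rw [hcard]
  have := ha1 k
  omega

/-- The 3-PARTITION instance has a solution iff the constructed MWPSAS_N1
instance admits a partition of `N = {i_1, ..., i_{3r}}` into `r` nonempty
subsets with objective value at most `B`. -/
theorem stmt_12 (ha1 : ∀ k, 1 < a k) (hsum : ∑ k, a k = r * B)
    (hlow : ∀ k, B < 4 * a k) (hhigh : ∀ k, 2 * a k < B) :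
    (∃ Z : Fin r → Finset (Fin (3 * r)),
        (∀ e e', e ≠ e' → Disjoint (Z e) (Z e')) ∧
        Finset.univ.biUnion Z = Finset.univ ∧
        (∀ e, ∑ k ∈ Z e, a k = B)) ↔
      (∃ P : Fin r → Finset (Fin (3 * r)),
        (∀ e, (P e).Nonempty) ∧
        (∀ e e', e ≠ e' → Disjoint (P e) (P e')) ∧
        Finset.univ.biUnion P = Finset.univ ∧
        Finset.univ.sup (fun e => loadN1 r a (P e)) ≤ B) := by
  have hB : 0 < r → 0 < B := by
    intro hr
    have h3 : 0 < 3 * r := by omega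
    have := hhigh ⟨0, h3⟩
    omega
  constructor
  · rintro ⟨Z, hdisj, hcov, hZ⟩
    refine ⟨Z, ?_, hdisj, hcov, ?_⟩
    · intro e
      rw [Finset.nonempty_iff_ne_empty]
      intro h
      have := hZ e
      rw [h, Finset.sum_empty] at this
      have := hB e.pos
      omega
    · refine Finset.sup_le fun e _ => ?_
      rw [load_eq r a ha1, hZ e]
  · rintro ⟨P, hne, hdisj, hcov, hsup⟩
    refine ⟨P, hdisj, hcov, ?_⟩
    have hle : ∀ e, ∑ k ∈ P e, a k ≤ B := by
      intro e
      rw [← load_eq r a ha1]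
      exact le_trans (Finset.le_sup (f := fun e => loadN1 r a (P e)) (Finset.mem_univ e)) hsup
    have htot : ∑ e : Fin r, ∑ k ∈ P e, a k = r * B := by
      rw [← Finset.sum_biUnion, hcov, hsum]
      intro e _ e' _ hee'
      exact hdisj e e' hee'
    by_contra hcon
    push_neg at hcon
    obtain ⟨e0, he0⟩ := hcon
    have hlt : ∑ k ∈ P e0, a k < B := lt_of_le_of_ne (hle e0) he0
    have : ∑ e : Fin r, ∑ k ∈ P e, a k < ∑ _e : Fin r, B :=
      Finset.sum_lt_sum (fun e _ => hle e) ⟨e0, Finset.mem_univ e0, hlt⟩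
    rw [htot, Finset.sum_const, Finset.card_univ, Fintype.card_fin, smul_eq_mul] at this
    omega

end ThreePartitionN1
end

section
/- Given a partition R^1,...,R^r of N, suppose P^1, P^2, ..., P^{e'} are nonempty pairwise disjoint subsets of N, each with load at most D, such that for each e < e' the witness inequality sum_{j in P^e} p_j + sum_{k in K_e} sum_{j in union_{g in R^k} M(j)} p_j >= (1/m)(sum_{j in N} p_j + sum_{u=1}^r sum_{g in union_{j in R^u} M(j)} p_g) holds, where the K_e are pairwise disjoint subsets of {1,...,r}, and the P^e cover N. Then e' <= m. -/
open Finset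

/-- If nonempty pairwise disjoint parts `P^1, ..., P^{e'}` cover `N`, each with
load at most `D`, and for each `e < e'` the witness inequality
`∑_{j ∈ P^e} p_j + ∑_{k ∈ K_e} ∑_{j ∈ ⋃_{g ∈ R^k} M(g)} p_j ≥
(1/m)(∑_{j ∈ N} p_j + ∑_u ∑_{g ∈ ⋃_{j ∈ R^u} M(j)} p_g)` holds with the `K_e`
pairwise disjoint, then `e' ≤ m`. -/
theorem stmt_16 {α : Type*} [DecidableEq α] (N M : Finset α) (p : α → ℕ)
    (Ma : α → Finset α) (m r e' : ℕ) (hm : 1 ≤ m)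
    (hNM : Disjoint N M) (hp : ∀ i ∈ N ∪ M, 0 < p i)
    (hMa : ∀ i ∈ N, Ma i ⊆ M)
    (R : Fin r → Finset α)
    (hRdisj : ∀ u u', u ≠ u' → Disjoint (R u) (R u'))
    (hRcover : Finset.univ.biUnion R = N)
    (D : ℕ)
    (P : Fin e' → Finset α)
    (hPne : ∀ e, (P e).Nonempty)
    (hPdisj : ∀ e f, e ≠ f → Disjoint (P e) (P f))
    (hPcover : Finset.univ.biUnion P = N)
    (hload : ∀ e, ∑ j ∈ P e, p j + ∑ j ∈ (P e).biUnion Ma, p j ≤ D)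
    (K : Fin e' → Finset (Fin r))
    (hKdisj : ∀ e f, e ≠ f → Disjoint (K e) (K f))
    (hwitness : ∀ e : Fin e', (e : ℕ) + 1 < e' →
      ((∑ j ∈ N, p j + ∑ u, ∑ g ∈ (R u).biUnion Ma, p g : ℕ) : ℚ) / m ≤
        ((∑ j ∈ P e, p j + ∑ u ∈ K e, ∑ g ∈ (R u).biUnion Ma, p g : ℕ) : ℚ)) :
    e' ≤ m := by

  by_contra hcon
  push_neg at hcon
  have he1 : 1 ≤ e' := le_trans hm hcon.le
  set T : ℕ := ∑ j ∈ N, p j + ∑ u, ∑ g ∈ (R u).biUnion Ma, p g with hT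
  have hlast : e' - 1 < e' := Nat.sub_lt he1 one_pos
  set last : Fin e' := ⟨e' - 1, hlast⟩ with hlastdef
  set S : Finset (Fin e') := Finset.univ.erase last with hS
  have hScard : S.card = e' - 1 := by
    rw [hS, Finset.card_erase_of_mem (Finset.mem_univ last), Finset.card_univ, Fintype.card_fin]
  have hPsub : ∀ e, P e ⊆ N := by
    intro e
    rw [← hPcover]; exact Finset.subset_biUnion_of_mem P (Finset.mem_univ e)
  have hsumP : ∑ e, ∑ j ∈ P e, p j = ∑ j ∈ N, p j := by
    rw [← hPcover, Finset.sum_biUnion (fun a _ b _ hab => hPdisj a b hab)]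
  have hsumK : ∑ e ∈ S, ∑ u ∈ K e, (∑ g ∈ (R u).biUnion Ma, p g) ≤
      ∑ u, ∑ g ∈ (R u).biUnion Ma, p g := by
    rw [← Finset.sum_biUnion (fun a _ b _ hab => hKdisj a b hab)]
    exact Finset.sum_le_sum_of_subset (Finset.subset_univ _)
  have hposlast : 0 < ∑ j ∈ P last, p j :=
    Finset.sum_pos (fun i hi => hp i (Finset.mem_union_left _ (hPsub last hi))) (hPne last)
  set A : ℕ := ∑ e ∈ S, (∑ j ∈ P e, p j + ∑ u ∈ K e, ∑ g ∈ (R u).biUnion Ma, p g) with hA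
  have hAle : A + ∑ j ∈ P last, p j ≤ T := by
    have h1 : ∑ e ∈ S, ∑ j ∈ P e, p j + ∑ j ∈ P last, p j = ∑ j ∈ N, p j := by
      rw [← hsumP, hS, Finset.sum_erase_add _ _ (Finset.mem_univ last)]
    rw [hA, Finset.sum_add_distrib, hT]
    omega
  have hmpos : (0:ℚ) < (m:ℚ) := by exact_mod_cast hm
  have hW : ∀ e ∈ S, ((T:ℚ)) / m ≤
      ((∑ j ∈ P e, p j + ∑ u ∈ K e, ∑ g ∈ (R u).biUnion Ma, p g : ℕ) : ℚ) := by
    intro e he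
    apply hwitness
    have hne : (e : ℕ) ≠ e' - 1 := fun h => (Finset.ne_of_mem_erase he) (Fin.ext h)
    have := e.isLt
    omega
  have hge : (S.card : ℚ) * ((T:ℚ)/m) ≤ (A : ℚ) := by
    have := Finset.card_nsmul_le_sum S _ _ hW
    rw [nsmul_eq_mul] at this
    refine this.trans ?_
    rw [hA]
    push_cast
    exact le_rfl
  rw [hScard, mul_div_assoc'] at hge
  have hge2 : (e' - 1) * T ≤ m * A := by
    have h := (div_le_iff₀ hmpos).mp hge
    have h2 : ((e' - 1 : ℕ) : ℚ) * (T:ℚ) ≤ (m:ℚ) * (A:ℚ) := by rw [mul_comm (A:ℚ)] at h; exact h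
    exact_mod_cast h2
  have hmm : m * T ≤ m * A :=
    le_trans (Nat.mul_le_mul_right T (by omega)) hge2
  have hTA : T ≤ A := Nat.le_of_mul_le_mul_left hmm (by omega)
  omega
end

section
/- If N^1, N^2 is a partition of N in the CLIQUE-derived MWPSAS instance with T_0 ⊆ N^1, T ⊆ N^2, S ⊆ union_{i in N^1} M(i), and V ⊆ union_{i in N^2} M(i), and f(N^1,N^2) <= n + |W| + k, then |W ∩ N^1| >= (k^2-k)/2 and |union_{i in N^1} M(i) ∩ V| <= k. -/
open Finset

section CliqueInstance

variable {V : Type*} [Fintype V] [DecidableEq V]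

/-- If a partition `N¹, N²` of `N` satisfies `T₀ ⊆ N¹`, `T ⊆ N²`,
`S ⊆ ⋃_{i ∈ N¹} M(i)`, `V ⊆ ⋃_{i ∈ N²} M(i)` and `f(N¹,N²) ≤ n + |W| + k`,
then `|W ∩ N¹| ≥ (k² - k)/2` and `|⋃_{i ∈ N¹} M(i) ∩ V| ≤ k`. -/
theorem stmt_19 (G : SimpleGraph V) [DecidableRel G.Adj] (k n : ℕ)
    (hn : Fintype.card V = n) (hk : 1 < k) (hkn : k < n)
    (hkW : (k ^ 2 - k) / 2 < G.edgeFinset.card)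
    (N1 N2 : Finset (NT G k))
    (hne1 : N1.Nonempty) (hne2 : N2.Nonempty) (hdisj : Disjoint N1 N2)
    (hcover : N1 ∪ N2 = Finset.univ)
    (hf : max (load G k N1) (load G k N2) ≤ n + G.edgeFinset.card + k)
    (hT0 : ∀ z : Fin 1, (Sum.inr (Sum.inr z) : NT G k) ∈ N1)
    (hT : ∀ t : Fin (tcard k), (Sum.inr (Sum.inl t) : NT G k) ∈ N2)
    (hS : ∀ s : Fin (scard G k), (Sum.inr s : MT G k) ∈ N1.biUnion (Ma G k))
    (hV : ∀ v : V, (Sum.inl v : MT G k) ∈ N2.biUnion (Ma G k)) :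
    (k ^ 2 - k) / 2 ≤
        (Finset.univ.filter (fun e : EdgeT G => (Sum.inl e : NT G k) ∈ N1)).card ∧
      (Finset.univ.filter
        (fun v : V => (Sum.inl v : MT G k) ∈ N1.biUnion (Ma G k))).card ≤ k := by
  classical
  set m := G.edgeFinset.card with hm
  set w1 := (Finset.univ.filter (fun e : EdgeT G => (Sum.inl e : NT G k) ∈ N1)).card with hw1
  set p := (Finset.univ.filter
        (fun v : V => (Sum.inl v : MT G k) ∈ N1.biUnion (Ma G k))).card with hp
  -- cardinality of N1
  have hN1L : N1.toLeft = Finset.univ.filter (fun e : EdgeT G => (Sum.inl e : NT G k) ∈ N1) := by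
    ext x; simp
  have hN1RL : N1.toRight.toLeft = ∅ := by
    ext t
    simp only [mem_toLeft, mem_toRight, Finset.notMem_empty, iff_false]
    intro h
    exact (Finset.disjoint_left.mp hdisj h) (hT t)
  have hN1RR : N1.toRight.toRight = (Finset.univ : Finset (Fin 1)) := by
    ext z
    simp only [mem_toRight, Finset.mem_univ, iff_true]
    exact hT0 z
  have hcardN1 : N1.card = w1 + 1 := by
    rw [← card_toLeft_add_card_toRight (u := N1), ← card_toLeft_add_card_toRight (u := N1.toRight),
      hN1L, hN1RL, hN1RR]
    simp [hw1]
  -- cardinality of biUnion over N1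
  have hB1L : (N1.biUnion (Ma G k)).toLeft
      = Finset.univ.filter (fun v : V => (Sum.inl v : MT G k) ∈ N1.biUnion (Ma G k)) := by
    ext x; simp
  have hB1R : (N1.biUnion (Ma G k)).toRight = (Finset.univ : Finset (Fin (scard G k))) := by
    ext s
    simp only [mem_toRight, Finset.mem_univ, iff_true]
    exact hS s
  have hcardB1 : (N1.biUnion (Ma G k)).card = p + scard G k := by
    rw [← card_toLeft_add_card_toRight, hB1L, hB1R, ← hp]
    simp
  -- cardinality of N2 (lower bound)
  have hN2RL : N2.toRight.toLeft = (Finset.univ : Finset (Fin (tcard k))) := by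
    ext t
    simp only [mem_toLeft, mem_toRight, Finset.mem_univ, iff_true]
    exact hT t
  have hcardN2 : N2.toLeft.card + tcard k ≤ N2.card := by
    rw [← card_toLeft_add_card_toRight (u := N2), ← card_toLeft_add_card_toRight (u := N2.toRight)]
    have : tcard k ≤ N2.toRight.toLeft.card + N2.toRight.toRight.card := by
      rw [hN2RL]
      simp
    omega
  -- cardinality of biUnion over N2 (lower bound)
  have hcardB2 : n ≤ (N2.biUnion (Ma G k)).card := by
    have h1 : (Finset.univ : Finset V).card ≤ (N2.biUnion (Ma G k)).toLeft.card := by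
      apply Finset.card_le_card
      intro v _
      simp only [mem_toLeft]
      exact hV v
    calc n = (Finset.univ : Finset V).card := by simp [hn]
      _ ≤ (N2.biUnion (Ma G k)).toLeft.card := h1
      _ ≤ (N2.biUnion (Ma G k)).card := card_toLeft_le
  -- w1 + w2 = m
  have hW12 : w1 + N2.toLeft.card = m := by
    have hN2L : N2.toLeft = Finset.univ.filter
        (fun e : EdgeT G => ¬ (Sum.inl e : NT G k) ∈ N1) := by
      ext x
      simp only [mem_toLeft, Finset.mem_filter, Finset.mem_univ, true_and]
      constructor
      · intro h; exact fun h1 => (Finset.disjoint_left.mp hdisj h1) h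
      · intro h
        have hx : (Sum.inl x : NT G k) ∈ N1 ∪ N2 := by rw [hcover]; exact Finset.mem_univ _
        rcases Finset.mem_union.mp hx with h1 | h2
        · exact absurd h1 h
        · exact h2
    rw [hw1, hN2L, Finset.card_filter_add_card_filter_not]
    simp [hm, Fintype.card_coe]
  -- the two load inequalities
  have hf1 : load G k N1 ≤ n + m + k := le_trans (le_max_left _ _) hf
  have hf2 : load G k N2 ≤ n + m + k := le_trans (le_max_right _ _) hf
  rw [load, hcardN1, hcardB1] at hf1
  have hf2' : (N2.toLeft.card + tcard k) + n ≤ n + m + k := by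
    calc (N2.toLeft.card + tcard k) + n ≤ N2.card + (N2.biUnion (Ma G k)).card :=
          Nat.add_le_add hcardN2 hcardB2
      _ = load G k N2 := rfl
      _ ≤ n + m + k := hf2
  -- arithmetic
  have hkk : k ≤ k ^ 2 := Nat.le_self_pow (by norm_num) k
  have heven : ∃ c, k ^ 2 - k = c + c := by
    obtain ⟨c, hc⟩ := Nat.even_mul_succ_self (k - 1)
    refine ⟨c, ?_⟩
    have hk1 : k - 1 + 1 = k := by omega
    rw [hk1, Nat.sub_one_mul, ← pow_two] at hc
    exact hc
  obtain ⟨c, hc⟩ := heven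
  have hsc : scard G k = n + m - (k ^ 2 - k) / 2 - 1 := by rw [scard, hn, hm]
  have htc : tcard k = (k ^ 2 + k) / 2 := rfl
  rw [hsc] at hf1
  constructor <;> omega

end CliqueInstance
end
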